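/- Let x, y ∈ Γ* be reduced words with al(x) = al(y) = A ∪ B, where A, B ⊆ L are disjoint and A × B ⊆ I. Write x ≡ x_A x_B and y ≡ y_A y_B, where x_A, y_A are words over ⋃_{γ∈A} Γ_γ with al(x_A) = al(y_A) = A and x_B, y_B are words over ⋃_{γ∈B} Γ_γ with al(x_B) = al(y_B) = B. Then x and y represent conjugate elements of G if and only if x_A and y_A represent conjugate elements of G and x_B and y_B represent conjugate elements of G. -/

import Mathlib

/-- The set of commutator relators defining a graph product. -/
def gpRels {L : Type} (I : L → L → Prop) (G : L → Type) [∀ α, Group (G α)] :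
    Set (Monoid.CoprodI G) :=
  {x | ∃ (α β : L) (g : G α) (h : G β), I α β ∧
    x = Monoid.CoprodI.of g * Monoid.CoprodI.of h *
        (Monoid.CoprodI.of g)⁻¹ * (Monoid.CoprodI.of h)⁻¹}

/-- The graph product of the groups `G α` over the independence relation `I`. -/
def GP {L : Type} (I : L → L → Prop) (G : L → Type) [∀ α, Group (G α)] : Type :=
  Monoid.CoprodI G ⧸ Subgroup.normalClosure (gpRels I G)

instance {L : Type} (I : L → L → Prop) (G : L → Type) [∀ α, Group (G α)] :
    Group (GP I G) := QuotientGroup.Quotient.group _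

/-- The canonical homomorphism of a node group into the graph product. -/
def gpOf {L : Type} (I : L → L → Prop) (G : L → Type) [∀ α, Group (G α)] (α : L) :
    G α →* GP I G :=
  (QuotientGroup.mk' _).comp Monoid.CoprodI.of

/-- A letter: a nontrivial element of one of the node groups. -/
abbrev Letter (L : Type) (G : L → Type) [∀ α, Group (G α)] : Type :=
  Σ α : L, {g : G α // g ≠ 1}

variable {L : Type} (I : L → L → Prop) (G : L → Type) [∀ α, Group (G α)]

/-- The element of the graph product represented by a word. -/
def evalWord (w : List (Letter L G)) : GP I G :=
  (w.map fun l => gpOf I G l.1 l.2.1).prod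

/-- One elementary commutation step between trace-equivalent words. -/
inductive TraceStep : List (Letter L G) → List (Letter L G) → Prop
  | swap (u v : List (Letter L G)) (a b : Letter L G) (h : I a.1 b.1) :
      TraceStep (u ++ a :: b :: v) (u ++ b :: a :: v)

/-- Trace equivalence: the congruence generated by commuting independent letters. -/
def TraceEquiv : List (Letter L G) → List (Letter L G) → Prop :=
  Relation.EqvGen (TraceStep I G)

/-- `IndepWord I G β u` means every letter of `u` is independent of `β`,
i.e. `u ∈ I(β)`. -/
def IndepWord (β : L) (u : List (Letter L G)) : Prop := ∀ c ∈ u, I c.1 β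

/-- A word is reduced if it contains no factor `b u b'` with `b, b' ∈ Γ_β`
and `u ∈ I(β)`. -/
def Reduced (w : List (Letter L G)) : Prop :=
  ¬ ∃ (β : L) (b b' : {g : G β // g ≠ 1}) (x u y : List (Letter L G)),
      w = x ++ (⟨β, b⟩ : Letter L G) :: (u ++ (⟨β, b'⟩ : Letter L G) :: y) ∧
      IndepWord I G β u

/-- `|w|_α` : number of letters of `w` in `Γ_α`. -/
noncomputable def countAlpha (α : L) (w : List (Letter L G)) : ℕ :=
  (w.filter fun l => Classical.propDecidable (l.1 = α) |>.decide).length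

/-- The alphabet `al(w)` of a word. -/
def alph (w : List (Letter L G)) : Set L := {α | ∃ l ∈ w, l.1 = α}

/-- A reduced word is cyclically reduced if it has no factorization `≡ a v a'`
with `a, a'` letters from the same node group. -/
def IsCyclicallyReduced (w : List (Letter L G)) : Prop :=
  Reduced I G w ∧
  ¬ ∃ (α : L) (a a' : {g : G α // g ≠ 1}) (v : List (Letter L G)),
      TraceEquiv I G w ((⟨α, a⟩ : Letter L G) :: (v ++ [(⟨α, a'⟩ : Letter L G)]))

/-- Words `u` and `v` are transposed if `u ≡ r s` and `v ≡ s r`. -/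
def Transposed (u v : List (Letter L G)) : Prop :=
  ∃ r s : List (Letter L G), TraceEquiv I G u (r ++ s) ∧ TraceEquiv I G v (s ++ r)

/-- `u ≈ v` : the reflexive-transitive closure of transposition. -/
def TransClosure : List (Letter L G) → List (Letter L G) → Prop :=
  Relation.ReflTransGen (Transposed I G)

/-- The formal inverse of a letter. -/
def letterInv (l : Letter L G) : Letter L G :=
  ⟨l.1, ⟨(l.2 : G l.1)⁻¹, inv_ne_one.mpr l.2.2⟩⟩

/-- The formal inverse `p̄` of a word `p`. -/
def wordInv (w : List (Letter L G)) : List (Letter L G) :=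
  (w.map (letterInv G)).reverse

/-- The dependence graph on `L`: distinct nodes are adjacent iff not independent. -/
def depGraph : SimpleGraph L where
  Adj a b := a ≠ b ∧ ¬ I a b ∧ ¬ I b a
  symm := by
    constructor
    intro a b ⟨h1, h2, h3⟩
    exact ⟨h1.symm, h3, h2⟩
  loopless := by constructor; intro a ⟨h1, _⟩; exact h1 rfl

/-- A word is connected if its alphabet induces a connected subgraph of the
dependence graph. -/
def ConnectedWord (w : List (Letter L G)) : Prop :=
  ((depGraph I).induce (alph G w)).Connected

/-- A word `w` is `α`-reduced if every word with fewer letters from `Γ_α`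
represents a different element of the graph product. -/
def AlphaReduced (α : L) (w : List (Letter L G)) : Prop :=
  ∀ w' : List (Letter L G), countAlpha G α w' < countAlpha G α w →
    evalWord I G w' ≠ evalWord I G w

/-!
The endomorphisms `π_A`, `π_B` of the graph product that kill the generators outside `A`,
resp. `B`, are retractions onto the subgroups generated by `A` and `B`, and their images commute
elementwise because `A × B ⊆ I`. Applying `π_A` and `π_B` to a conjugation `x ∼ y` gives
`x_A ∼ y_A` and `x_B ∼ y_B`; conversely, if `c` conjugates `x_A` to `y_A` and `d` conjugates
`x_B` to `y_B`, then `π_A c * π_B d` conjugates `x_A x_B` to `y_A y_B`.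
-/

section GraphProduct

variable {I G}

theorem commute_gpOf {α β : L} (hI : I α β) (g : G α) (h : G β) :
    Commute (gpOf I G α g) (gpOf I G β h) := by
  rw [← commutatorElement_eq_one_iff_commute, commutatorElement_def]
  exact (QuotientGroup.eq_one_iff _).2 (Subgroup.subset_normalClosure ⟨α, β, g, h, hI, rfl⟩)

@[elab_as_elim]
theorem GP.induction_on {motive : GP I G → Prop} (z : GP I G) (one : motive 1)
    (of : ∀ α (g : G α), motive (gpOf I G α g))
    (mul : ∀ x y, motive x → motive y → motive (x * y)) : motive z := by
  induction z using QuotientGroup.induction_on with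
  | H m => induction m using Monoid.CoprodI.induction_on with
    | one => exact one
    | of α g => exact of α g
    | mul x y hx hy => exact mul _ _ hx hy

theorem normalClosure_gpRels_le_ker (S : Set L) [DecidablePred (· ∈ S)] :
    Subgroup.normalClosure (gpRels I G) ≤
      (Monoid.CoprodI.lift fun α => if α ∈ S then gpOf I G α else 1).ker := by
  refine Subgroup.normalClosure_le_normal ?_
  rintro _ ⟨α, β, g, h, hI, rfl⟩
  simp only [SetLike.mem_coe, MonoidHom.mem_ker, map_mul, map_inv, Monoid.CoprodI.lift_of]
  split_ifs
  · rw [← commutatorElement_def, commutatorElement_eq_one_iff_commute]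
    exact commute_gpOf hI g h
  all_goals simp

open Classical in
/-- The retraction of the graph product onto the subgroup generated by the nodes in `S`. -/
noncomputable def GP.proj (S : Set L) : GP I G →* GP I G :=
  QuotientGroup.lift _ _ (normalClosure_gpRels_le_ker S)

open Classical in
theorem GP.proj_gpOf (S : Set L) (α : L) (g : G α) :
    GP.proj S (gpOf I G α g) = if α ∈ S then gpOf I G α g else 1 := by
  change Monoid.CoprodI.lift (fun α => if α ∈ S then gpOf I G α else 1)
    (Monoid.CoprodI.of g) = _
  rw [Monoid.CoprodI.lift_of]
  split_ifs <;> rfl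

theorem GP.commute_proj_proj {A B : Set L} (hAB : ∀ a ∈ A, ∀ b ∈ B, I a b) (u v : GP I G) :
    Commute (GP.proj A u) (GP.proj B v) := by
  induction u using GP.induction_on with
  | one => simp
  | mul x y hx hy => rw [map_mul]; exact hx.mul_left hy
  | of α g =>
    induction v using GP.induction_on with
    | one => simp
    | mul x y hx hy => rw [map_mul]; exact hx.mul_right hy
    | of β h =>
      rw [GP.proj_gpOf, GP.proj_gpOf]
      split_ifs with hα hβ
      · exact commute_gpOf (hAB α hα β hβ) g h
      all_goals simp

theorem evalWord_cons (l : Letter L G) (w : List (Letter L G)) :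
    evalWord I G (l :: w) = gpOf I G l.1 l.2.1 * evalWord I G w := by
  simp [evalWord]

theorem evalWord_append (u v : List (Letter L G)) :
    evalWord I G (u ++ v) = evalWord I G u * evalWord I G v := by
  simp [evalWord]

theorem TraceEquiv.evalWord_eq {u v : List (Letter L G)} (h : TraceEquiv I G u v) :
    evalWord I G u = evalWord I G v := by
  induction h with
  | rel _ _ h =>
    obtain ⟨u, v, a, b, hI⟩ := h
    simp only [evalWord_append, evalWord_cons, (commute_gpOf hI a.2.1 b.2.1).left_comm]
  | refl => rfl
  | symm _ _ _ ih => exact ih.symm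
  | trans _ _ _ _ _ ih₁ ih₂ => exact ih₁.trans ih₂

theorem alph_cons_subset (l : Letter L G) (w : List (Letter L G)) :
    alph G w ⊆ alph G (l :: w) :=
  fun _ ⟨m, hm, e⟩ => ⟨m, List.mem_cons_of_mem l hm, e⟩

theorem mem_alph_cons (l : Letter L G) (w : List (Letter L G)) : l.1 ∈ alph G (l :: w) :=
  ⟨l, List.mem_cons_self, rfl⟩

theorem GP.proj_evalWord_of_alph_subset {S : Set L} {w : List (Letter L G)}
    (hw : alph G w ⊆ S) : GP.proj S (evalWord I G w) = evalWord I G w := by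
  induction w with
  | nil => exact map_one _
  | cons l w ih =>
    rw [evalWord_cons, map_mul, GP.proj_gpOf, if_pos (hw (mem_alph_cons l w)),
      ih ((alph_cons_subset l w).trans hw)]

theorem GP.proj_evalWord_of_disjoint {S : Set L} {w : List (Letter L G)}
    (hw : Disjoint (alph G w) S) : GP.proj S (evalWord I G w) = 1 := by
  induction w with
  | nil => exact map_one _
  | cons l w ih =>
    rw [evalWord_cons, map_mul, GP.proj_gpOf, if_neg (hw.notMem_of_mem_left (mem_alph_cons l w)),
      ih (hw.mono_left (alph_cons_subset l w)), one_mul]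

end GraphProduct

theorem isConj_mul_iff_of_commute_retractions {H : Type*} [Group H] (p q : H →* H)
    (hpq : ∀ u v, Commute (p u) (q v)) {a b a' b' : H}
    (hpa : p a = a) (hpa' : p a' = a') (hqb : q b = b) (hqb' : q b' = b')
    (hpb : p b = 1) (hpb' : p b' = 1) (hqa : q a = 1) (hqa' : q a' = 1) :
    IsConj (a * b) (a' * b') ↔ IsConj a a' ∧ IsConj b b' := by
  constructor
  · intro h
    constructor
    · simpa [hpa, hpa', hpb, hpb'] using p.map_isConj h
    · simpa [hqa, hqa', hqb, hqb'] using q.map_isConj h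
  · rintro ⟨⟨c, hc⟩, ⟨d, hd⟩⟩
    have hpc : SemiconjBy (p c) a a' := by simpa only [hpa, hpa'] using hc.map p
    have hqd : SemiconjBy (q d) b b' := by simpa only [hqb, hqb'] using hd.map q
    have hca : Commute (q d) a := hpa ▸ (hpq a d).symm
    have hcb : Commute (p c) b' := hqb' ▸ hpq c b'
    refine ⟨Units.map p c * Units.map q d, ?_⟩
    rw [Units.val_mul, Units.coe_map, Units.coe_map]
    exact (hpc.mul_right hcb).mul_left (SemiconjBy.mul_right hca hqd)

theorem conjugacy_splits_over_independent_components_general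
    {L : Type} (I : L → L → Prop) (G : L → Type) [∀ α, Group (G α)]
    (A B : Set L) (hdisj : Disjoint A B) (hAB : ∀ a ∈ A, ∀ b ∈ B, I a b)
    (x y xA xB yA yB : List (Letter L G))
    (hxA : alph G xA = A) (hyA : alph G yA = A)
    (hxB : alph G xB = B) (hyB : alph G yB = B)
    (hxsplit : TraceEquiv I G x (xA ++ xB))
    (hysplit : TraceEquiv I G y (yA ++ yB)) :
    IsConj (evalWord I G x) (evalWord I G y) ↔
      IsConj (evalWord I G xA) (evalWord I G yA) ∧
      IsConj (evalWord I G xB) (evalWord I G yB) := by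
  rw [hxsplit.evalWord_eq, hysplit.evalWord_eq, evalWord_append, evalWord_append]
  exact isConj_mul_iff_of_commute_retractions (GP.proj A) (GP.proj B) (GP.commute_proj_proj hAB)
    (GP.proj_evalWord_of_alph_subset hxA.le) (GP.proj_evalWord_of_alph_subset hyA.le)
    (GP.proj_evalWord_of_alph_subset hxB.le) (GP.proj_evalWord_of_alph_subset hyB.le)
    (GP.proj_evalWord_of_disjoint (hxB ▸ hdisj.symm))
    (GP.proj_evalWord_of_disjoint (hyB ▸ hdisj.symm))
    (GP.proj_evalWord_of_disjoint (hxA ▸ hdisj)) (GP.proj_evalWord_of_disjoint (hyA ▸ hdisj))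

theorem conjugacy_splits_over_independent_components
    {L : Type} [Finite L] (I : L → L → Prop) (G : L → Type) [∀ α, Group (G α)]
    (hirr : ∀ α, ¬ I α α) (hsym : ∀ α β, I α β → I β α)
    (A B : Set L) (hdisj : Disjoint A B) (hAB : ∀ a ∈ A, ∀ b ∈ B, I a b)
    (x y xA xB yA yB : List (Letter L G))
    (hxred : Reduced I G x) (hyred : Reduced I G y)
    (halx : alph G x = A ∪ B) (haly : alph G y = A ∪ B)
    (hxA : alph G xA = A) (hyA : alph G yA = A)
    (hxB : alph G xB = B) (hyB : alph G yB = B)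
    (hxsplit : TraceEquiv I G x (xA ++ xB))
    (hysplit : TraceEquiv I G y (yA ++ yB)) :
    IsConj (evalWord I G x) (evalWord I G y) ↔
      IsConj (evalWord I G xA) (evalWord I G yA) ∧
      IsConj (evalWord I G xB) (evalWord I G yB) :=
  conjugacy_splits_over_independent_components_general I G A B hdisj hAB x y xA xB yA yB hxA hyA hxB
    hyB hxsplit hysplit
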